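/- For every integer n ≥ 3, the polynomials f_n(y) = Σ_{k=0}^{⌊n/2⌋} P(n,k)·y^k satisfy the identity f_n(y) = f_{n-1}(y) + (n-1)·y·f_{n-2}(y) − y²·f'_{n-2}(y), where f' denotes the formal derivative. -/

import Mathlib

/-!
A partial matching is determined by its set of arcs. Sort the matchings of `[n]` with `k` arcs
and no neighbor alignment by the fate of the point `n`. If `n` is unmatched, deleting it leaves
such a matching of `[n - 1]`. If `n` is matched to `i`, deleting `i` and `n` and closing the gap
at `i` leaves such a matching of `[n - 2]` with `k - 1` arcs, and this is reversible: a new arc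
`(i, n)` can be inserted into a matching of `[n - 2]` at each of the `n - 1` gaps `i` except the
`k - 1` gaps directly after a right endpoint, which would create a neighbor alignment. Hence
`P(n, k) = P(n - 1, k) + (n - k) P(n - 2, k - 1)`, which is the coefficient of `y ^ k` in the
identity, as `(n - 1) - (k - 1) = n - k`.
-/

open Finset

/-- `(i, j)` is an arc of the linear representation of the set partition `P` of
`{1, ..., n}`: `i < j`, both lie in the same block, and no element of that block
lies strictly between them. -/
def IsArc {n : ℕ} (P : Finpartition (Finset.Icc 1 n)) (a : ℕ × ℕ) : Prop :=
  a.1 < a.2 ∧ ∃ B ∈ P.parts, a.1 ∈ B ∧ a.2 ∈ B ∧ ∀ c ∈ B, ¬ (a.1 < c ∧ c < a.2)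

/-- The number of arcs of a set partition. -/
noncomputable def numArcs {n : ℕ} (P : Finpartition (Finset.Icc 1 n)) : ℕ :=
  {a : ℕ × ℕ | IsArc P a}.ncard

/-- A partial matching: every block has at most two elements. -/
def IsMatching {n : ℕ} (P : Finpartition (Finset.Icc 1 n)) : Prop :=
  ∀ B ∈ P.parts, B.card ≤ 2

/-- A neighbor alignment: arcs `(i₁, j₁)`, `(i₂, j₂)` with `i₁ < j₁ < i₂ < j₂`
and `j₁ + 1 = i₂`. -/
def HasNbrAlign {n : ℕ} (P : Finpartition (Finset.Icc 1 n)) : Prop :=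
  ∃ a b : ℕ × ℕ, IsArc P a ∧ IsArc P b ∧ a.2 + 1 = b.1

/-- A left nesting: arcs `(i₁, j₁)`, `(i₂, j₂)` with `i₁ < i₂ < j₂ < j₁`
and `i₁ + 1 = i₂`. -/
def HasLeftNesting {n : ℕ} (P : Finpartition (Finset.Icc 1 n)) : Prop :=
  ∃ a b : ℕ × ℕ, IsArc P a ∧ IsArc P b ∧ a.1 + 1 = b.1 ∧ b.2 < a.2

/-- A right nesting: arcs `(i₁, j₁)`, `(i₂, j₂)` with `i₁ < i₂ < j₂ < j₁`
and `j₂ + 1 = j₁`. -/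
def HasRightNesting {n : ℕ} (P : Finpartition (Finset.Icc 1 n)) : Prop :=
  ∃ a b : ℕ × ℕ, IsArc P a ∧ IsArc P b ∧ a.1 < b.1 ∧ b.2 + 1 = a.2

/-- The number of left crossings: pairs of arcs `(i₁, j₁)`, `(i₂, j₂)` with
`i₁ < i₂ < j₁ < j₂` and `i₁ + 1 = i₂`. -/
noncomputable def numLeftCrossings {n : ℕ} (P : Finpartition (Finset.Icc 1 n)) : ℕ :=
  {p : (ℕ × ℕ) × (ℕ × ℕ) |
    IsArc P p.1 ∧ IsArc P p.2 ∧ p.1.1 + 1 = p.2.1 ∧ p.2.1 < p.1.2 ∧ p.1.2 < p.2.2}.ncard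

/-- The number of transients: elements of a block that are neither the minimum
nor the maximum of their block. -/
noncomputable def numTransients {n : ℕ} (P : Finpartition (Finset.Icc 1 n)) : ℕ :=
  {x : ℕ | ∃ B ∈ P.parts, x ∈ B ∧ (∃ y ∈ B, y < x) ∧ (∃ y ∈ B, x < y)}.ncard

/-- `Pnum n k`: the number of partial matchings of `[n]` with exactly `k` arcs
and no neighbor alignments. -/
noncomputable def Pnum (n k : ℕ) : ℕ :=
  {P : Finpartition (Finset.Icc 1 n) |
    IsMatching P ∧ numArcs P = k ∧ ¬ HasNbrAlign P}.ncard

/-- `Qnum n k`: the number of partial matchings of `[n]` with exactly `k` arcs,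
no neighbor alignments and no left nestings. -/
noncomputable def Qnum (n k : ℕ) : ℕ :=
  {P : Finpartition (Finset.Icc 1 n) |
    IsMatching P ∧ numArcs P = k ∧ ¬ HasNbrAlign P ∧ ¬ HasLeftNesting P}.ncard

/-- `Rnum n k`: the number of partial matchings of `[n]` with exactly `k` arcs,
no neighbor alignments, no left nestings and no right nestings. -/
noncomputable def Rnum (n k : ℕ) : ℕ :=
  {P : Finpartition (Finset.Icc 1 n) |
    IsMatching P ∧ numArcs P = k ∧ ¬ HasNbrAlign P ∧ ¬ HasLeftNesting P ∧
      ¬ HasRightNesting P}.ncard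

/-- `Tnum n k`: the number of set partitions of `[n]` with exactly `k` arcs and
no right nestings. -/
noncomputable def Tnum (n k : ℕ) : ℕ :=
  {P : Finpartition (Finset.Icc 1 n) | numArcs P = k ∧ ¬ HasRightNesting P}.ncard

/-- `Stirling m b`: the Stirling number of the second kind, the number of set
partitions of `{1, ..., m}` into `b` blocks. -/
noncomputable def Stirling (m b : ℕ) : ℕ :=
  {P : Finpartition (Finset.Icc 1 m) | P.parts.card = b}.ncard

open Polynomial in
/-- The generating polynomial of the numbers `P(n,k)`. -/
noncomputable def fpoly (n : ℕ) : Polynomial ℤ :=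
  ∑ k ∈ Finset.range (n / 2 + 1), Polynomial.C (Pnum n k : ℤ) * Polynomial.X ^ k

lemma Finpartition.eq_of_part_eq {α : Type*} [DecidableEq α] {s : Finset α}
    {P Q : Finpartition s} (h : ∀ x ∈ s, P.part x = Q.part x) : P = Q := by
  have parts_subset : ∀ {P Q : Finpartition s}, (∀ x ∈ s, P.part x = Q.part x) →
      ∀ B ∈ P.parts, B ∈ Q.parts := by
    intro P Q h B hB
    obtain ⟨x, hx⟩ := P.nonempty_of_mem_parts hB
    rw [← P.part_eq_of_mem hB hx, h x (P.le hB hx)]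
    exact Q.part_mem.2 (P.le hB hx)
  ext B
  exact ⟨parts_subset h B, parts_subset (fun x hx => (h x hx).symm) B⟩

lemma prod_eq_of_pair_eq {α : Type*} [LinearOrder α] {a b c d : α} (hab : a < b) (hcd : c < d)
    (h : ({a, b} : Finset α) = {c, d}) : (a, b) = (c, d) := by
  have ha : a ∈ ({c, d} : Finset α) := h ▸ by simp
  have hb : b ∈ ({c, d} : Finset α) := h ▸ by simp
  have hc : c ∈ ({a, b} : Finset α) := h ▸ by simp
  simp only [Finset.mem_insert, Finset.mem_singleton] at ha hb hc
  grind

def insertGap (i x : ℕ) : ℕ := if x < i then x else x + 1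

def closeGap (i x : ℕ) : ℕ := if x < i then x else x - 1

lemma insertGap_strictMono (i : ℕ) : StrictMono (insertGap i) := by
  intro x y h
  unfold insertGap
  split_ifs <;> omega

lemma insertGap_ne (i x : ℕ) : insertGap i x ≠ i := by
  unfold insertGap; split_ifs <;> omega

lemma closeGap_insertGap (i x : ℕ) : closeGap i (insertGap i x) = x := by
  unfold closeGap insertGap; split_ifs <;> omega

lemma insertGap_closeGap {i x : ℕ} (hx : x ≠ i) : insertGap i (closeGap i x) = x := by
  unfold closeGap insertGap; split_ifs <;> omega

lemma closeGap_strictMonoOn (i : ℕ) : StrictMonoOn (closeGap i) {x | x ≠ i} := by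
  intro x hx y hy h
  simp only [Set.mem_ofPred_eq] at hx hy
  unfold closeGap
  split_ifs <;> omega

lemma insertGap_add_one_eq_iff {i x : ℕ} (y : ℕ) (hx : x + 1 ≠ i) :
    insertGap i x + 1 = insertGap i y ↔ x + 1 = y := by
  unfold insertGap; split_ifs <;> omega

lemma insertGap_add_one_eq_self_iff {i x : ℕ} : insertGap i x + 1 = i ↔ x + 1 = i := by
  unfold insertGap; split_ifs <;> omega

lemma mapsTo_insertGap (i m : ℕ) :
    Set.MapsTo (insertGap i) (Set.Icc 1 m) (Set.Icc 1 (m + 1) \ {i}) := by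
  intro x hx
  simp only [Set.mem_Icc, Set.mem_sdiff, Set.mem_singleton_iff] at hx ⊢
  exact ⟨by unfold insertGap; split_ifs <;> omega, insertGap_ne i x⟩

lemma mapsTo_closeGap {i m : ℕ} (hi : i ∈ Set.Icc 1 (m + 1)) :
    Set.MapsTo (closeGap i) (Set.Icc 1 (m + 1) \ {i}) (Set.Icc 1 m) := by
  intro x hx
  simp only [Set.mem_Icc, Set.mem_sdiff, Set.mem_singleton_iff] at hi hx ⊢
  unfold closeGap; split_ifs <;> omega

structure IsArcSet (S : Set ℕ) (A : Finset (ℕ × ℕ)) : Prop where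
  lt : ∀ p ∈ A, p.1 < p.2
  fst_mem : ∀ p ∈ A, p.1 ∈ S
  snd_mem : ∀ p ∈ A, p.2 ∈ S
  disjoint : ∀ p ∈ A, ∀ q ∈ A, p ≠ q → p.1 ≠ q.1 ∧ p.1 ≠ q.2 ∧ p.2 ≠ q.1 ∧ p.2 ≠ q.2

namespace IsArcSet

variable {S T : Set ℕ} {A : Finset (ℕ × ℕ)}

lemma eq_of_common_endpoint (hA : IsArcSet S A) {p q : ℕ × ℕ} (hp : p ∈ A) (hq : q ∈ A) {x : ℕ}
    (hxp : x = p.1 ∨ x = p.2) (hxq : x = q.1 ∨ x = q.2) : p = q := by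
  by_contra hpq
  have := hA.disjoint p hp q hq hpq
  omega

lemma mono (hA : IsArcSet S A) (hST : S ⊆ T) : IsArcSet T A :=
  ⟨hA.lt, fun p hp => hST (hA.fst_mem p hp), fun p hp => hST (hA.snd_mem p hp), hA.disjoint⟩

lemma image (hA : IsArcSet S A) {f : ℕ → ℕ} (hf : StrictMonoOn f S) (hmaps : Set.MapsTo f S T) :
    IsArcSet T (A.image (Prod.map f f)) := by
  refine ⟨Finset.forall_mem_image.2 fun p hp => hf (hA.fst_mem p hp) (hA.snd_mem p hp) (hA.lt p hp),
    Finset.forall_mem_image.2 fun p hp => hmaps (hA.fst_mem p hp),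
    Finset.forall_mem_image.2 fun p hp => hmaps (hA.snd_mem p hp), ?_⟩
  simp only [Finset.forall_mem_image]
  intro p hp q hq hpq
  obtain ⟨h1, h2, h3, h4⟩ := hA.disjoint p hp q hq (fun h => hpq (h ▸ rfl))
  have hp1 := hA.fst_mem p hp; have hp2 := hA.snd_mem p hp
  have hq1 := hA.fst_mem q hq; have hq2 := hA.snd_mem q hq
  exact ⟨fun h => h1 (hf.injOn hp1 hq1 h), fun h => h2 (hf.injOn hp1 hq2 h),
    fun h => h3 (hf.injOn hp2 hq1 h), fun h => h4 (hf.injOn hp2 hq2 h)⟩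

lemma erase (hA : IsArcSet S A) {p : ℕ × ℕ} (hp : p ∈ A) :
    IsArcSet (S \ {p.1, p.2}) (A.erase p) := by
  refine ⟨fun q hq => hA.lt q (Finset.mem_of_mem_erase hq), ?_, ?_,
    fun q hq r hr => hA.disjoint q (Finset.mem_of_mem_erase hq) r (Finset.mem_of_mem_erase hr)⟩
  all_goals
    intro q hq
    have hqp := hA.disjoint q (Finset.mem_of_mem_erase hq) p hp (Finset.ne_of_mem_erase hq)
    simp only [Set.mem_sdiff, Set.mem_insert_iff, Set.mem_singleton_iff]
  · exact ⟨hA.fst_mem q (Finset.mem_of_mem_erase hq), by omega⟩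
  · exact ⟨hA.snd_mem q (Finset.mem_of_mem_erase hq), by omega⟩

lemma insert (hA : IsArcSet S A) {a b : ℕ} (hab : a < b) (ha : a ∉ S) (hb : b ∉ S) :
    IsArcSet (insert a (insert b S)) (insert (a, b) A) := by
  have hS : ∀ x ∈ S, x ≠ a ∧ x ≠ b := fun x hx =>
    ⟨fun h => ha (h ▸ hx), fun h => hb (h ▸ hx)⟩
  refine ⟨?_, ?_, ?_, ?_⟩
  · simp only [Finset.mem_insert, forall_eq_or_imp]
    exact ⟨hab, hA.lt⟩
  · simp only [Finset.mem_insert, forall_eq_or_imp, Set.mem_insert_iff]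
    exact ⟨by simp, fun p hp => Or.inr (Or.inr (hA.fst_mem p hp))⟩
  · simp only [Finset.mem_insert, forall_eq_or_imp, Set.mem_insert_iff]
    exact ⟨by simp, fun p hp => Or.inr (Or.inr (hA.snd_mem p hp))⟩
  · simp only [Finset.mem_insert, forall_eq_or_imp]
    refine ⟨⟨fun h => absurd rfl h, fun q hq _ => ?_⟩, fun p hp => ⟨fun _ => ?_, hA.disjoint p hp⟩⟩
    · have := hS _ (hA.fst_mem q hq); have := hS _ (hA.snd_mem q hq); omega
    · have := hS _ (hA.fst_mem p hp); have := hS _ (hA.snd_mem p hp); omega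

end IsArcSet

def NoNbrAlign (A : Finset (ℕ × ℕ)) : Prop := ∀ p ∈ A, ∀ q ∈ A, p.2 + 1 ≠ q.1

open scoped Classical in
noncomputable def arcSets (n k : ℕ) : Finset (Finset (ℕ × ℕ)) :=
  (Finset.Icc 1 n ×ˢ Finset.Icc 1 n).powerset.filter
    fun A => IsArcSet (Set.Icc 1 n) A ∧ A.card = k ∧ NoNbrAlign A

lemma mem_arcSets {n k : ℕ} {A : Finset (ℕ × ℕ)} :
    A ∈ arcSets n k ↔ IsArcSet (Set.Icc 1 n) A ∧ A.card = k ∧ NoNbrAlign A := by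
  simp only [arcSets, Finset.mem_filter, Finset.mem_powerset, and_iff_right_iff_imp]
  rintro ⟨hA, -⟩ p hp
  have h1 := hA.fst_mem p hp; have h2 := hA.snd_mem p hp
  simp only [Set.mem_Icc] at h1 h2
  simp only [Finset.mem_product, Finset.mem_Icc]
  omega

/-- The left endpoints `i` for which the arc `(i, n + 2)` can be added to `B` (after opening a
gap at `i`) without creating a neighbor alignment. -/
def slots (n : ℕ) (B : Finset (ℕ × ℕ)) : Finset ℕ :=
  Finset.Icc 1 (n + 1) \ B.image fun p => p.2 + 1

lemma card_slots_add_card {n : ℕ} {B : Finset (ℕ × ℕ)} (hB : IsArcSet (Set.Icc 1 n) B) :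
    (slots n B).card + B.card = n + 1 := by
  have hsub : B.image (fun p => p.2 + 1) ⊆ Finset.Icc 1 (n + 1) := by
    simp only [Finset.subset_iff, Finset.mem_image, Finset.mem_Icc, forall_exists_index, and_imp,
      forall_apply_eq_imp_iff₂]
    intro p hp
    have := hB.snd_mem p hp
    simp only [Set.mem_Icc] at this
    omega
  have hinj : Set.InjOn (fun p : ℕ × ℕ => p.2 + 1) B := fun p hp q hq h =>
    hB.eq_of_common_endpoint hp hq (Or.inr rfl) (Or.inr (by simpa using h))
  rw [slots, ← Finset.card_image_of_injOn hinj, Finset.card_sdiff_add_card_eq_card hsub,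
    Nat.card_Icc, Nat.add_sub_cancel]

def addLastArc (n i : ℕ) (B : Finset (ℕ × ℕ)) : Finset (ℕ × ℕ) :=
  insert (i, n + 2) (B.image (Prod.map (insertGap i) (insertGap i)))

def removeLastArc (n i : ℕ) (A : Finset (ℕ × ℕ)) : Finset (ℕ × ℕ) :=
  (A.erase (i, n + 2)).image (Prod.map (closeGap i) (closeGap i))

lemma notMem_image_insertGap (n i : ℕ) (B : Finset (ℕ × ℕ)) :
    (i, n + 2) ∉ B.image (Prod.map (insertGap i) (insertGap i)) := by
  simp only [Finset.mem_image, Prod.map, Prod.mk.injEq, not_exists, not_and]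
  exact fun p _ h => absurd h (insertGap_ne i p.1)

lemma card_addLastArc (n i : ℕ) (B : Finset (ℕ × ℕ)) : (addLastArc n i B).card = B.card + 1 := by
  rw [addLastArc, Finset.card_insert_of_notMem (notMem_image_insertGap n i B),
    Finset.card_image_of_injective _
      ((insertGap_strictMono i).injective.prodMap (insertGap_strictMono i).injective)]

lemma removeLastArc_addLastArc (n i : ℕ) (B : Finset (ℕ × ℕ)) :
    removeLastArc n i (addLastArc n i B) = B := by
  rw [removeLastArc, addLastArc, Finset.erase_insert (notMem_image_insertGap n i B),
    Finset.image_image]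
  conv_rhs => rw [← Finset.image_id (s := B)]
  exact Finset.image_congr fun p _ =>
    Prod.ext (closeGap_insertGap i p.1) (closeGap_insertGap i p.2)

lemma addLastArc_removeLastArc {S : Set ℕ} {n i : ℕ} {A : Finset (ℕ × ℕ)} (hA : IsArcSet S A)
    (hi : (i, n + 2) ∈ A) : addLastArc n i (removeLastArc n i A) = A := by
  have himage : (A.erase (i, n + 2)).image
      (Prod.map (insertGap i) (insertGap i) ∘ Prod.map (closeGap i) (closeGap i)) =
      A.erase (i, n + 2) := by
    conv_rhs => rw [← Finset.image_id (s := A.erase (i, n + 2))]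
    refine Finset.image_congr fun q hq => ?_
    have := hA.disjoint q (Finset.mem_of_mem_erase hq) _ hi (Finset.ne_of_mem_erase hq)
    exact Prod.ext (insertGap_closeGap this.1) (insertGap_closeGap this.2.2.1)
  rw [removeLastArc, addLastArc, Finset.image_image, himage, Finset.insert_erase hi]

lemma noNbrAlign_addLastArc_iff {n i : ℕ} {B : Finset (ℕ × ℕ)} (hB : IsArcSet (Set.Icc 1 n) B)
    (hi : i ∈ Set.Icc 1 (n + 1)) :
    NoNbrAlign (addLastArc n i B) ↔ NoNbrAlign B ∧ i ∈ slots n B := by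
  have hfst : ∀ p ∈ B, n + 2 + 1 ≠ insertGap i p.1 := fun p hp => by
    have := hB.fst_mem p hp
    simp only [Set.mem_Icc] at this
    unfold insertGap; split_ifs <;> omega
  simp only [Set.mem_Icc] at hi
  simp only [NoNbrAlign, addLastArc, Finset.forall_mem_insert, Finset.forall_mem_image]
  simp only [slots, Finset.mem_sdiff, Finset.mem_Icc, Finset.mem_image, Prod.map_fst, Prod.map_snd,
    ne_eq, insertGap_add_one_eq_self_iff, not_exists, not_and]
  constructor
  · rintro ⟨-, h2⟩
    have hslot : ∀ p ∈ B, p.2 + 1 ≠ i := fun p hp => (h2 hp).1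
    refine ⟨fun p hp q hq => ?_, hi, hslot⟩
    exact (insertGap_add_one_eq_iff q.1 (hslot p hp)).not.mp ((h2 hp).2 hq)
  · rintro ⟨hBA, -, hslot⟩
    refine ⟨⟨by omega, fun p hp => hfst p hp⟩, fun p hp => ⟨hslot p hp, fun q hq => ?_⟩⟩
    exact (insertGap_add_one_eq_iff q.1 (hslot p hp)).not.mpr (hBA p hp q hq)

lemma addLastArc_mem_arcSets {n k i : ℕ} {B : Finset (ℕ × ℕ)} (hB : B ∈ arcSets n k)
    (hi : i ∈ slots n B) : addLastArc n i B ∈ arcSets (n + 2) (k + 1) := by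
  obtain ⟨hBarc, hcard, hBalign⟩ := mem_arcSets.1 hB
  have hi' : i ∈ Set.Icc 1 (n + 1) := by
    simpa using (Finset.mem_sdiff.1 hi).1
  have harc : IsArcSet (Set.Icc 1 (n + 2)) (addLastArc n i B) := by
    simp only [Set.mem_Icc] at hi'
    refine ((hBarc.image ((insertGap_strictMono i).strictMonoOn _) (mapsTo_insertGap i n)).insert
      (by omega) (by simp) (by simp)).mono fun x hx => ?_
    simp only [Set.mem_insert_iff, Set.mem_sdiff, Set.mem_Icc, Set.mem_singleton_iff] at hx ⊢
    omega
  exact mem_arcSets.2 ⟨harc, by rw [card_addLastArc, hcard],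
    (noNbrAlign_addLastArc_iff hBarc (by simpa using hi')).2 ⟨hBalign, hi⟩⟩

lemma removeLastArc_mem_arcSets {n k i : ℕ} {A : Finset (ℕ × ℕ)}
    (hA : A ∈ arcSets (n + 2) (k + 1)) (hi : (i, n + 2) ∈ A) :
    removeLastArc n i A ∈ arcSets n k ∧ i ∈ slots n (removeLastArc n i A) := by
  obtain ⟨hAarc, hcard, hAalign⟩ := mem_arcSets.1 hA
  have hi' : i ∈ Set.Icc 1 (n + 1) := by
    have h1 := hAarc.fst_mem _ hi; have h2 := hAarc.lt _ hi
    simp only [Set.mem_Icc] at h1 h2 ⊢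
    omega
  have hBarc : IsArcSet (Set.Icc 1 n) (removeLastArc n i A) := by
    refine ((hAarc.erase hi).mono ?_).image
      ((closeGap_strictMonoOn i).mono fun x hx => hx.2) (mapsTo_closeGap hi')
    intro x
    simp only [Set.mem_sdiff, Set.mem_Icc, Set.mem_insert_iff, Set.mem_singleton_iff]
    omega
  have hAeq := addLastArc_removeLastArc hAarc hi
  obtain ⟨hBalign, hslot⟩ := (noNbrAlign_addLastArc_iff hBarc hi').1 (by rwa [hAeq])
  refine ⟨mem_arcSets.2 ⟨hBarc, ?_, hBalign⟩, hslot⟩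
  have := card_addLastArc n i (removeLastArc n i A)
  rw [hAeq, hcard] at this
  omega

lemma card_filter_arcSets_snd_eq (n k : ℕ) :
    ((arcSets (n + 2) (k + 1)).filter fun A => ∃ p ∈ A, p.2 = n + 2).card =
      ((arcSets n k).sigma (slots n)).card := by
  symm
  refine Finset.card_bij (fun x _ => addLastArc n x.2 x.1) ?_ ?_ ?_
  · rintro ⟨B, i⟩ hBi
    obtain ⟨hB, hi⟩ := Finset.mem_sigma.1 hBi
    exact Finset.mem_filter.2
      ⟨addLastArc_mem_arcSets hB hi, (i, n + 2), Finset.mem_insert_self _ _, rfl⟩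
  · rintro ⟨B, i⟩ hBi ⟨B', i'⟩ - heq
    obtain ⟨hB, hi⟩ := Finset.mem_sigma.1 hBi
    have harc := (mem_arcSets.1 (addLastArc_mem_arcSets hB hi)).1
    dsimp only at heq
    obtain rfl : i = i' := congrArg Prod.fst <| harc.eq_of_common_endpoint
      (Finset.mem_insert_self _ _) (by rw [heq]; exact Finset.mem_insert_self _ _) (x := n + 2)
      (Or.inr rfl) (Or.inr rfl)
    have := congrArg (removeLastArc n i) heq
    rw [removeLastArc_addLastArc, removeLastArc_addLastArc] at this
    rw [this]
  · intro A hA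
    obtain ⟨hA, ⟨i, j⟩, hp, rfl : j = n + 2⟩ := Finset.mem_filter.1 hA
    obtain ⟨hB, hi⟩ := removeLastArc_mem_arcSets hA hp
    exact ⟨⟨removeLastArc n i A, i⟩, Finset.mem_sigma.2 ⟨hB, hi⟩,
      addLastArc_removeLastArc (mem_arcSets.1 hA).1 hp⟩

lemma filter_arcSets_not_snd_eq (n k : ℕ) :
    ((arcSets (n + 1) k).filter fun A => ¬ ∃ p ∈ A, p.2 = n + 1) = arcSets n k := by
  ext A
  simp only [Finset.mem_filter, mem_arcSets, not_exists, not_and]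
  constructor
  · rintro ⟨⟨hA, hcard, halign⟩, hlast⟩
    refine ⟨⟨hA.lt, fun p hp => ?_, fun p hp => ?_, hA.disjoint⟩, hcard, halign⟩ <;>
    · have := hA.lt p hp; have := hA.fst_mem p hp; have := hA.snd_mem p hp; have := hlast p hp
      simp only [Set.mem_Icc] at *
      omega
  · rintro ⟨hA, hcard, halign⟩
    refine ⟨⟨hA.mono (Set.Icc_subset_Icc_right (by omega)), hcard, halign⟩, fun p hp => ?_⟩
    have := hA.snd_mem p hp
    simp only [Set.mem_Icc] at this
    omega

lemma card_arcSets_add_two_add_one (n k : ℕ) :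
    (arcSets (n + 2) (k + 1)).card + k * (arcSets n k).card =
      (arcSets (n + 1) (k + 1)).card + (n + 1) * (arcSets n k).card := by
  have hslots : ∑ B ∈ arcSets n k, (slots n B).card + k * (arcSets n k).card =
      (n + 1) * (arcSets n k).card := calc
    _ = ∑ B ∈ arcSets n k, ((slots n B).card + B.card) := by
      rw [Finset.sum_add_distrib, Finset.sum_congr rfl fun B hB => (mem_arcSets.1 hB).2.1,
        Finset.sum_const, smul_eq_mul, mul_comm]
    _ = ∑ _B ∈ arcSets n k, (n + 1) :=
      Finset.sum_congr rfl fun B hB => card_slots_add_card (mem_arcSets.1 hB).1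
    _ = (n + 1) * (arcSets n k).card := by rw [Finset.sum_const, smul_eq_mul, mul_comm]
  rw [← Finset.card_filter_add_card_filter_not (s := arcSets (n + 2) (k + 1))
      (fun A => ∃ p ∈ A, p.2 = n + 2), card_filter_arcSets_snd_eq, Finset.card_sigma,
    filter_arcSets_not_snd_eq, ← hslots]
  ring

section Matching

variable {n : ℕ} {P Q : Finpartition (Finset.Icc 1 n)}

open scoped Classical in
noncomputable def arcs (P : Finpartition (Finset.Icc 1 n)) : Finset (ℕ × ℕ) :=
  (Finset.Icc 1 n ×ˢ Finset.Icc 1 n).filter (IsArc P)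

lemma mem_arcs {a : ℕ × ℕ} : a ∈ arcs P ↔ IsArc P a := by
  simp only [arcs, Finset.mem_filter, Finset.mem_product, and_iff_right_iff_imp]
  rintro ⟨-, B, hB, h1, h2, -⟩
  exact ⟨P.le hB h1, P.le hB h2⟩

lemma numArcs_eq_card_arcs (P : Finpartition (Finset.Icc 1 n)) : numArcs P = (arcs P).card := by
  rw [numArcs, ← Set.ncard_coe_finset]
  congr
  ext a
  simp [mem_arcs]

lemma noNbrAlign_arcs_iff : NoNbrAlign (arcs P) ↔ ¬ HasNbrAlign P := by
  simp only [NoNbrAlign, HasNbrAlign, mem_arcs, not_exists, not_and]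
  exact ⟨fun h a b ha hb hab => h a ha b hb hab, fun h a ha b hb hab => h a b ha hb hab⟩

lemma IsMatching.isArc_iff (hP : IsMatching P) {a : ℕ × ℕ} :
    IsArc P a ↔ a.1 < a.2 ∧ a.2 ∈ P.part a.1 := by
  constructor
  · rintro ⟨hlt, B, hB, h1, h2, -⟩
    exact ⟨hlt, P.part_eq_of_mem hB h1 ▸ h2⟩
  · rintro ⟨hlt, h⟩
    have ha : a.1 ∈ Finset.Icc 1 n := P.part_nonempty.1 ⟨_, h⟩
    refine ⟨hlt, P.part a.1, P.part_mem.2 ha, P.mem_part ha, h, fun c hc hbetween => ?_⟩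
    have : 2 < (P.part a.1).card := Finset.two_lt_card.2
      ⟨a.1, P.mem_part ha, a.2, h, c, hc, by omega, by omega, by omega⟩
    exact this.not_ge (hP _ (P.part_mem.2 ha))

lemma IsMatching.part_eq_pair (hP : IsMatching P) {a : ℕ × ℕ} (ha : IsArc P a) {x : ℕ}
    (hx : x = a.1 ∨ x = a.2) : P.part x = {a.1, a.2} := by
  obtain ⟨hlt, B, hB, h1, h2, -⟩ := ha
  have hpair : ({a.1, a.2} : Finset ℕ) ⊆ B := Finset.insert_subset h1 (by simpa using h2)
  rw [P.part_eq_of_mem hB (by rcases hx with rfl | rfl <;> assumption)]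
  refine (Finset.eq_of_subset_of_card_le hpair ((hP B hB).trans ?_)).symm
  rw [Finset.card_pair hlt.ne]

lemma IsMatching.isArcSet_arcs (hP : IsMatching P) : IsArcSet (Set.Icc 1 n) (arcs P) := by
  refine ⟨fun p hp => (mem_arcs.1 hp).1, fun p hp => ?_, fun p hp => ?_, fun p hp q hq hpq => ?_⟩
  · obtain ⟨-, B, hB, h1, -⟩ := mem_arcs.1 hp
    simpa using P.le hB h1
  · obtain ⟨-, B, hB, -, h2, -⟩ := mem_arcs.1 hp
    simpa using P.le hB h2
  · have hp' := mem_arcs.1 hp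
    have hq' := mem_arcs.1 hq
    have common : ∀ x, (x = p.1 ∨ x = p.2) → (x = q.1 ∨ x = q.2) → False := fun x hxp hxq =>
      hpq <| prod_eq_of_pair_eq hp'.1 hq'.1 <| by
        rw [← hP.part_eq_pair hp' hxp, hP.part_eq_pair hq' hxq]
    exact ⟨fun h => common _ (Or.inl rfl) (Or.inl h), fun h => common _ (Or.inl rfl) (Or.inr h),
      fun h => common _ (Or.inr rfl) (Or.inl h), fun h => common _ (Or.inr rfl) (Or.inr h)⟩

lemma IsMatching.mem_part_iff (hP : IsMatching P) {x y : ℕ} (hxy : x ≠ y) :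
    y ∈ P.part x ↔ (x, y) ∈ arcs P ∨ (y, x) ∈ arcs P := by
  have hsymm : y ∈ P.part x ↔ x ∈ P.part y := by
    simp only [Finpartition.mem_part_iff_exists, and_comm]
  simp only [mem_arcs, hP.isArc_iff]
  rcases Nat.lt_or_gt_of_ne hxy with h | h
  · simp [h, h.not_gt]
  · simp [h, h.not_gt, hsymm]

lemma IsMatching.eq_of_arcs_eq (hP : IsMatching P) (hQ : IsMatching Q) (h : arcs P = arcs Q) :
    P = Q := by
  refine Finpartition.eq_of_part_eq fun x _ => Finset.ext fun y => ?_
  obtain rfl | hxy := eq_or_ne x y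
  · rw [P.mem_part_self, Q.mem_part_self]
  · rw [hP.mem_part_iff hxy, hQ.mem_part_iff hxy, h]

end Matching

def arcRel (A : Finset (ℕ × ℕ)) (x y : ℕ) : Prop := x = y ∨ (x, y) ∈ A ∨ (y, x) ∈ A

lemma arcRel_symm {A : Finset (ℕ × ℕ)} {x y : ℕ} : arcRel A x y → arcRel A y x := by
  rintro (rfl | h | h)
  exacts [Or.inl rfl, Or.inr (Or.inr h), Or.inr (Or.inl h)]

namespace IsArcSet

variable {S : Set ℕ} {A : Finset (ℕ × ℕ)}

lemma eq_of_arcRel (hA : IsArcSet S A) {a x y : ℕ} (hx : arcRel A a x) (hy : arcRel A a y)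
    (hax : a ≠ x) (hay : a ≠ y) : x = y := by
  rcases hx with rfl | hx | hx
  · exact absurd rfl hax
  all_goals
    rcases hy with rfl | hy | hy
    · exact absurd rfl hay
    all_goals
      have := hA.eq_of_common_endpoint hx hy (x := a) (by simp) (by simp)
      simp only [Prod.ext_iff] at this
      omega

def setoid (hA : IsArcSet S A) : Setoid ℕ where
  r := arcRel A
  iseqv := by
    refine ⟨fun _ => Or.inl rfl, arcRel_symm, fun {x y z} hxy hyz => ?_⟩
    obtain rfl | hxy' := eq_or_ne x y
    · exact hyz
    obtain rfl | hyz' := eq_or_ne y z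
    · exact hxy
    exact Or.inl (hA.eq_of_arcRel (arcRel_symm hxy) hyz hxy'.symm hyz')

variable {n : ℕ}

noncomputable def toFinpartition (hA : IsArcSet (Set.Icc 1 n) A) :
    Finpartition (Finset.Icc 1 n) :=
  @Finpartition.ofSetSetoid _ _ hA.setoid _ (Classical.decRel _)

lemma mem_part_toFinpartition (hA : IsArcSet (Set.Icc 1 n) A) {x y : ℕ} :
    y ∈ hA.toFinpartition.part x ↔ x ∈ Finset.Icc 1 n ∧ y ∈ Finset.Icc 1 n ∧ arcRel A x y := by
  classical
  exact Finpartition.mem_part_ofSetSetoid_iff_rel _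

lemma isMatching_toFinpartition (hA : IsArcSet (Set.Icc 1 n) A) :
    IsMatching hA.toFinpartition := by
  intro B hB
  obtain ⟨x, hx⟩ := hA.toFinpartition.nonempty_of_mem_parts hB
  rw [← hA.toFinpartition.part_eq_of_mem hB hx]
  have partner_unique : ∀ u ∈ hA.toFinpartition.part x, ∀ v ∈ hA.toFinpartition.part x,
      u ≠ x → v ≠ x → u = v := fun u hu v hv hux hvx =>
    hA.eq_of_arcRel ((mem_part_toFinpartition hA).1 hu).2.2 ((mem_part_toFinpartition hA).1 hv).2.2
      hux.symm hvx.symm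
  by_contra! h
  obtain ⟨u, hu, v, hv, w, hw, huv, huw, hvw⟩ := Finset.two_lt_card.1 h
  have := partner_unique u hu v hv
  have := partner_unique u hu w hw
  have := partner_unique v hv w hw
  grind

lemma arcs_toFinpartition (hA : IsArcSet (Set.Icc 1 n) A) : arcs hA.toFinpartition = A := by
  ext ⟨a, b⟩
  rw [mem_arcs, hA.isMatching_toFinpartition.isArc_iff, mem_part_toFinpartition]
  constructor
  · rintro ⟨hlt, -, -, h | h | h⟩
    · omega
    · exact h
    · exact absurd (hA.lt _ h) hlt.not_gt
  · intro h
    have ha := hA.fst_mem _ h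
    have hb := hA.snd_mem _ h
    simp only [Set.mem_Icc] at ha hb
    exact ⟨hA.lt _ h, Finset.mem_Icc.2 ha, Finset.mem_Icc.2 hb, Or.inr (Or.inl h)⟩

end IsArcSet

theorem Pnum_eq_card_arcSets (n k : ℕ) : Pnum n k = (arcSets n k).card := by
  rw [Pnum, ← Set.ncard_coe_finset]
  refine Set.ncard_congr (fun P _ => arcs P) ?_ ?_ ?_
  · rintro P ⟨hP, hk, hNA⟩
    exact mem_arcSets.2 ⟨hP.isArcSet_arcs, numArcs_eq_card_arcs P ▸ hk, noNbrAlign_arcs_iff.2 hNA⟩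
  · intro P Q hP hQ h
    exact hP.1.eq_of_arcs_eq hQ.1 h
  · intro A hA
    obtain ⟨hA, hk, hNA⟩ := mem_arcSets.1 hA
    refine ⟨hA.toFinpartition, ⟨hA.isMatching_toFinpartition, ?_, ?_⟩, hA.arcs_toFinpartition⟩
    · rw [numArcs_eq_card_arcs, hA.arcs_toFinpartition, hk]
    · rw [← noNbrAlign_arcs_iff, hA.arcs_toFinpartition]
      exact hNA

theorem Pnum_add_two_add_one (n k : ℕ) :
    Pnum (n + 2) (k + 1) + k * Pnum n k = Pnum (n + 1) (k + 1) + (n + 1) * Pnum n k := by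
  simp only [Pnum_eq_card_arcSets]
  exact card_arcSets_add_two_add_one n k

theorem Pnum_zero (n : ℕ) : Pnum n 0 = 1 := by
  rw [Pnum_eq_card_arcSets, Finset.card_eq_one]
  refine ⟨∅, Finset.eq_singleton_iff_unique_mem.2 ⟨?_, fun A hA => ?_⟩⟩
  · exact mem_arcSets.2 ⟨⟨by simp, by simp, by simp, by simp⟩, rfl, by simp [NoNbrAlign]⟩
  · exact Finset.card_eq_zero.1 (mem_arcSets.1 hA).2.1

theorem Pnum_eq_zero_of_lt {n k : ℕ} (h : n < 2 * k) : Pnum n k = 0 := by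
  induction n using Nat.strong_induction_on generalizing k with
  | _ n ih =>
    obtain _ | k := k
    · omega
    match n with
    | 0 | 1 =>
      rw [Pnum_eq_card_arcSets, Finset.card_eq_zero, Finset.eq_empty_iff_forall_notMem]
      intro A hA
      obtain ⟨hA, hcard, -⟩ := mem_arcSets.1 hA
      obtain ⟨p, hp⟩ := Finset.card_pos.1 (by omega : 0 < A.card)
      have := hA.lt p hp; have := hA.fst_mem p hp; have := hA.snd_mem p hp
      simp only [Set.mem_Icc] at *
      omega
    | n + 2 =>
      have := Pnum_add_two_add_one n k
      rw [ih (n + 1) (by omega) (by omega), ih n (by omega) (by omega)] at this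
      omega

open Polynomial

lemma coeff_fpoly (n j : ℕ) : (fpoly n).coeff j = Pnum n j := by
  simp only [fpoly, finsetSum_coeff, coeff_C_mul_X_pow, Finset.sum_ite_eq, Finset.mem_range]
  split_ifs with h
  · rfl
  · rw [Pnum_eq_zero_of_lt (by omega), Nat.cast_zero]

lemma coeff_X_sq_mul_derivative_succ {R : Type*} [Semiring R] (p : R[X]) (m : ℕ) :
    (X ^ 2 * derivative p).coeff (m + 1) = p.coeff m * m := by
  rw [pow_two, mul_assoc, coeff_X_mul]
  cases m with
  | zero => simp
  | succ m => rw [coeff_X_mul, coeff_derivative, Nat.cast_succ]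

open Polynomial in
/-- Recurrence for the polynomials `f_n(y) = ∑_k P(n,k) y^k`. -/
theorem stmt_3 (n : ℕ) (hn : 3 ≤ n) :
    fpoly n = fpoly (n - 1) + Polynomial.C ((n : ℤ) - 1) * Polynomial.X * fpoly (n - 2)
      - Polynomial.X ^ 2 * Polynomial.derivative (fpoly (n - 2)) := by
  obtain ⟨m, rfl⟩ : ∃ m, n = m + 2 := ⟨n - 2, by omega⟩
  rw [show m + 2 - 1 = m + 1 by omega, Nat.add_sub_cancel]
  ext (_ | j)
  · simp [coeff_fpoly, Pnum_zero]
  · rw [coeff_sub, coeff_add, mul_assoc, coeff_C_mul, coeff_X_mul, coeff_X_sq_mul_derivative_succ,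
      coeff_fpoly, coeff_fpoly, coeff_fpoly]
    have := Pnum_add_two_add_one m j
    zify at this
    push_cast
    linear_combination this
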